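/- For the two-platform social optimum, the system λ₁ = √((1 + λ₂/μ)/(c₁ + 1/(λ₂μ))) and λ₂ = √((1 + λ₁/μ)/(c₂ + 1/(λ₁μ))) has a unique solution with λ₁ > 0 and λ₂ > 0. -/

import Mathlib

/-!
A solution is `(x, bestResponse c₂ μ x)` with `x` a fixed point of
`bestResponse c₁ μ ∘ bestResponse c₂ μ`. Each `bestResponse c μ` is monotone and lies above the
diagonal where `c x² ≤ 1` and below it where `c x² ≥ 1`, so the intermediate value theorem gives
a fixed point.

For uniqueness, with `ρ = λ₁ / λ₂` the two equations read
`c₁ λ₁ - 1/λ₁ = -(ρ - 1/ρ)/μ` and `c₂ λ₂ - 1/λ₂ = (ρ - 1/ρ)/μ`. Since `t ↦ c t - 1/t` and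
`ρ ↦ ρ - 1/ρ` are increasing, a larger `ρ` forces a smaller `λ₁` and a larger `λ₂`, hence a
smaller `λ₁ / λ₂`; so two solutions share `ρ`, and then `λ₁` and `λ₂`.
-/

open Set

noncomputable def bestResponse (c μ x : ℝ) : ℝ := √((1 + x / μ) / (c + 1 / (x * μ)))

section BestResponse

variable {c μ x : ℝ}

lemma bestResponse_pos (hc : 0 ≤ c) (hμ : 0 < μ) (hx : 0 < x) : 0 < bestResponse c μ x :=
  Real.sqrt_pos.mpr (by positivity)

lemma monotoneOn_bestResponse (hc : 0 ≤ c) (hμ : 0 < μ) : MonotoneOn (bestResponse c μ) (Ioi 0) := by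
  intro x (hx : 0 < x) y (hy : 0 < y) hxy
  unfold bestResponse
  gcongr

lemma continuousOn_bestResponse (hc : 0 ≤ c) (hμ : 0 < μ) :
    ContinuousOn (bestResponse c μ) (Ioi 0) := by
  intro x (hx : 0 < x)
  unfold bestResponse
  fun_prop (disch := positivity)

lemma sq_mul_add_one_div (hμ : 0 < μ) (hx : 0 < x) :
    x ^ 2 * (c + 1 / (x * μ)) = c * x ^ 2 + x / μ := by
  field_simp

lemma le_bestResponse (hc : 0 ≤ c) (hμ : 0 < μ) (hx : 0 < x) (h : c * x ^ 2 ≤ 1) :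
    x ≤ bestResponse c μ x := by
  rw [bestResponse, Real.le_sqrt hx.le (by positivity), le_div_iff₀ (by positivity),
    sq_mul_add_one_div hμ hx]
  linarith

lemma bestResponse_le (hc : 0 ≤ c) (hμ : 0 < μ) (hx : 0 < x) (h : 1 ≤ c * x ^ 2) :
    bestResponse c μ x ≤ x := by
  rw [bestResponse, Real.sqrt_le_left hx.le, div_le_iff₀ (by positivity),
    sq_mul_add_one_div hμ hx]
  linarith

/-- The equation `y = bestResponse c μ x` is the first-order condition `∂π/∂y = 0`,
multiplied by `y`. -/
lemma marginal_eq_of_eq_bestResponse {y : ℝ} (hc : 0 ≤ c) (hμ : 0 < μ) (hx : 0 < x) (hy : 0 < y)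
    (h : y = bestResponse c μ x) : c * y - y⁻¹ = (x / y - y / x) / μ := by
  have hsq : y ^ 2 = (1 + x / μ) / (c + 1 / (x * μ)) := by
    rw [h, bestResponse, Real.sq_sqrt (by positivity)]
  field_simp at hsq ⊢
  linear_combination hsq

end BestResponse

lemma strictMonoOn_mul_sub_inv {c : ℝ} (hc : 0 ≤ c) :
    StrictMonoOn (fun x : ℝ => c * x - x⁻¹) (Ioi 0) := by
  intro x (hx : 0 < x) y (hy : 0 < y) hxy
  have := (inv_lt_inv₀ hy hx).2 hxy
  have := mul_le_mul_of_nonneg_left hxy.le hc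
  dsimp only
  linarith

section Equilibrium

variable {c₁ c₂ μ : ℝ}

lemma exists_bestResponse_comp_eq_self (hc₁ : 0 < c₁) (hc₂ : 0 < c₂) (hμ : 0 < μ) :
    ∃ x, 0 < x ∧ bestResponse c₁ μ (bestResponse c₂ μ x) = x := by
  set g := fun x => bestResponse c₁ μ (bestResponse c₂ μ x)
  have le_g {x : ℝ} (hx : 0 < x) (h₁ : c₁ * x ^ 2 ≤ 1) (h₂ : c₂ * x ^ 2 ≤ 1) : x ≤ g x :=
    (le_bestResponse hc₁.le hμ hx h₁).trans <| monotoneOn_bestResponse hc₁.le hμ hx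
      (bestResponse_pos hc₂.le hμ hx) (le_bestResponse hc₂.le hμ hx h₂)
  have g_le {x : ℝ} (hx : 0 < x) (h₁ : 1 ≤ c₁ * x ^ 2) (h₂ : 1 ≤ c₂ * x ^ 2) : g x ≤ x :=
    (monotoneOn_bestResponse hc₁.le hμ (bestResponse_pos hc₂.le hμ hx) hx
      (bestResponse_le hc₂.le hμ hx h₂)).trans (bestResponse_le hc₁.le hμ hx h₁)
  set a := √(c₁ + c₂)⁻¹
  set b := √(c₁⁻¹ + c₂⁻¹)
  have ha : 0 < a := Real.sqrt_pos.2 (by positivity)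
  have hab : a ≤ b := Real.sqrt_le_sqrt <|
    (inv_anti₀ hc₁ (by linarith)).trans (by linarith [inv_pos.2 hc₂])
  have ha_sq : a ^ 2 = (c₁ + c₂)⁻¹ := Real.sq_sqrt (by positivity)
  have hb_sq : b ^ 2 = c₁⁻¹ + c₂⁻¹ := Real.sq_sqrt (by positivity)
  have hga : a ≤ g a := le_g ha
    (by rw [ha_sq, ← div_eq_mul_inv, div_le_one (by positivity)]; linarith)
    (by rw [ha_sq, ← div_eq_mul_inv, div_le_one (by positivity)]; linarith)
  have hgb : g b ≤ b := g_le (ha.trans_le hab)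
    (by rw [hb_sq, mul_add, mul_inv_cancel₀ hc₁.ne']; linarith [mul_pos hc₁ (inv_pos.2 hc₂)])
    (by rw [hb_sq, mul_add, mul_inv_cancel₀ hc₂.ne']; linarith [mul_pos hc₂ (inv_pos.2 hc₁)])
  have hcont : ContinuousOn (fun x => g x - x) (Icc a b) :=
    (((continuousOn_bestResponse hc₁.le hμ).comp (continuousOn_bestResponse hc₂.le hμ)
      fun x hx => bestResponse_pos hc₂.le hμ hx).mono (Icc_subset_Ioi_iff hab |>.2 ha)).sub
      continuousOn_id
  have h_zero : (0 : ℝ) ∈ Icc (g b - b) (g a - a) := ⟨by linarith, by linarith⟩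
  obtain ⟨x, hx, hgx⟩ := intermediate_value_Icc' hab hcont h_zero
  exact ⟨x, ha.trans_le hx.1, sub_eq_zero.1 hgx⟩

section Marginal

variable {a₁ a₂ b₁ b₂ : ℝ} (hc₁ : 0 < c₁) (hc₂ : 0 < c₂) (hμ : 0 < μ)
  (ha₁ : 0 < a₁) (ha₂ : 0 < a₂) (hb₁ : 0 < b₁) (hb₂ : 0 < b₂)
  (ha₁' : c₁ * a₁ - a₁⁻¹ = (a₂ / a₁ - a₁ / a₂) / μ)
  (ha₂' : c₂ * a₂ - a₂⁻¹ = (a₁ / a₂ - a₂ / a₁) / μ)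
  (hb₁' : c₁ * b₁ - b₁⁻¹ = (b₂ / b₁ - b₁ / b₂) / μ)
  (hb₂' : c₂ * b₂ - b₂⁻¹ = (b₁ / b₂ - b₂ / b₁) / μ)
include hc₁ hc₂ hμ ha₁ ha₂ hb₁ hb₂ ha₁' ha₂' hb₁' hb₂'

lemma div_le_div_of_marginal_eq (h : a₁ / a₂ ≤ b₁ / b₂) : b₁ / b₂ ≤ a₁ / a₂ := by
  have h_inv : b₂ / b₁ ≤ a₂ / a₁ := by
    simpa only [inv_div] using inv_anti₀ (by positivity) h
  have h₁ : b₁ ≤ a₁ := (strictMonoOn_mul_sub_inv hc₁.le).le_iff_le hb₁ ha₁ |>.1 <| by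
    rw [ha₁', hb₁']
    gcongr
  have h₂ : a₂ ≤ b₂ := (strictMonoOn_mul_sub_inv hc₂.le).le_iff_le ha₂ hb₂ |>.1 <| by
    rw [ha₂', hb₂']
    gcongr
  gcongr

lemma eq_of_marginal_eq : a₁ = b₁ ∧ a₂ = b₂ := by
  have hρ : a₁ / a₂ = b₁ / b₂ := by
    rcases le_total (a₁ / a₂) (b₁ / b₂) with h | h
    · exact le_antisymm h
        (div_le_div_of_marginal_eq hc₁ hc₂ hμ ha₁ ha₂ hb₁ hb₂ ha₁' ha₂' hb₁' hb₂' h)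
    · exact le_antisymm
        (div_le_div_of_marginal_eq hc₁ hc₂ hμ hb₁ hb₂ ha₁ ha₂ hb₁' hb₂' ha₁' ha₂' h) h
  have hρ' : a₂ / a₁ = b₂ / b₁ := by rw [← inv_div, hρ, inv_div]
  constructor
  · exact (strictMonoOn_mul_sub_inv hc₁.le).injOn ha₁ hb₁ <| by
      rw [ha₁', hb₁', hρ, hρ']
  · exact (strictMonoOn_mul_sub_inv hc₂.le).injOn ha₂ hb₂ <| by
      rw [ha₂', hb₂', hρ, hρ']

end Marginal

end Equilibrium

theorem stmt_6 (c₁ c₂ μ : ℝ) (hc₁ : 0 < c₁) (hc₂ : 0 < c₂) (hμ : 0 < μ) :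
    ∃! lam : ℝ × ℝ, 0 < lam.1 ∧ 0 < lam.2 ∧
      lam.1 = Real.sqrt ((1 + lam.2 / μ) / (c₁ + 1 / (lam.2 * μ))) ∧
      lam.2 = Real.sqrt ((1 + lam.1 / μ) / (c₂ + 1 / (lam.1 * μ))) := by
  obtain ⟨x, hx, hfix⟩ := exists_bestResponse_comp_eq_self hc₁ hc₂ hμ
  have hy := bestResponse_pos hc₂.le hμ hx
  refine ⟨(x, bestResponse c₂ μ x), ⟨hx, hy, hfix.symm, rfl⟩, ?_⟩
  rintro ⟨p, q⟩ ⟨hp, hq, hpq, hqp⟩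
  obtain ⟨h₁, h₂⟩ := eq_of_marginal_eq hc₁ hc₂ hμ hp hq hx hy
    (marginal_eq_of_eq_bestResponse hc₁.le hμ hq hp hpq)
    (marginal_eq_of_eq_bestResponse hc₂.le hμ hp hq hqp)
    (marginal_eq_of_eq_bestResponse hc₁.le hμ hy hx hfix.symm)
    (marginal_eq_of_eq_bestResponse hc₂.le hμ hx hy rfl)
  exact Prod.ext h₁ h₂
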